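/- arXiv:2605.04319 — 4 statements merged into one kernel-verified Lean document; each statement's English description precedes it below -/
import Mathlib

section
/- Let K be an integral domain of characteristic zero, and let φ and f be formal power series over K such that the constant coefficient of φ is nonzero, the constant coefficient of f is zero, and the x^1-coefficient of f is nonzero. Let f̄ be the compositional inverse of f (i.e., f̄ has zero constant term and f(f̄(x)) = f̄(f(x)) = x), and assume f̄(x) = x·φ(f̄(x)). Then for every formal power series g over K and every positive integer n, n·[x^n] g(f̄(x)) = [x^{n-1}] (g'(x)·φ(x)^n). -/
/-!
Write `w = X q` with `q = φ(w)` a unit and `r = q⁻¹`. By the chain rule and `q^n r^n = 1`,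
`n [x^n] g(w) = [x^(n-1)] g'(w) w' = [x^(n-1)] (g' φ^n)(w) r^n w'`.
The right side is the residue of `(g' φ^n)(w) dw / w^n`, and residues are invariant under the
substitution `t ↦ w`: on `P = X^j` with `t = m - j > 0` the integrand reduces to `r^(t+1) w'`,
and `t r^(t+1) w' = t r^t - X (r^t)'` has vanishing `x^t` coefficient.
-/
/-- Composition `g(h(x))` of formal power series, defined coefficientwise by
`[x^n] g(h(x)) = Σ_{i=0}^{n} g_i · [x^n] h(x)^i` (valid when `h` has zero constant term). -/
noncomputable def psComp {K : Type*} [CommRing K] (g h : PowerSeries K) : PowerSeries K :=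
  PowerSeries.mk fun n =>
    ∑ i ∈ Finset.range (n + 1), (PowerSeries.coeff i g) * (PowerSeries.coeff n (h ^ i))

namespace PowerSeries

variable {R : Type*} [CommRing R]

theorem coeff_X_mul_derivative (f : R⟦X⟧) (n : ℕ) :
    coeff n (X * d⁄dX R f) = n • coeff n f := by
  cases n with
  | zero => simp
  | succ n => rw [coeff_succ_X_mul, coeff_derivative, nsmul_eq_mul]; push_cast; ring

theorem sq_mul_derivative_eq_neg_derivative_of_mul_eq_one {q r : R⟦X⟧} (hqr : q * r = 1) :
    r ^ 2 * d⁄dX R q = -d⁄dX R r := by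
  have h : q * d⁄dX R r + r * d⁄dX R q = 0 := by
    simpa using congrArg (d⁄dX R) hqr
  linear_combination r * h - d⁄dX R r * hqr

theorem derivative_X_mul (q : R⟦X⟧) : d⁄dX R (X * q) = q + X * d⁄dX R q := by
  simp [Derivation.leibniz]; ring

theorem coeff_pow_succ_mul_derivative_X_mul [IsAddTorsionFree R] {q r : R⟦X⟧}
    (hqr : q * r = 1) (t : ℕ) :
    coeff t (r ^ (t + 1) * d⁄dX R (X * q)) = if t = 0 then 1 else 0 := by
  cases t with
  | zero =>
    rw [derivative_X_mul, pow_one, mul_add, mul_comm r q, hqr, mul_left_comm, map_add,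
      coeff_zero_X_mul]
    simp
  | succ s =>
    have hscaled : (s + 1) • (r ^ (s + 2) * d⁄dX R (X * q)) =
        (s + 1) • r ^ (s + 1) - X * d⁄dX R (r ^ (s + 1)) := by
      rw [derivative_X_mul, derivative_pow, Nat.add_sub_cancel, nsmul_eq_mul, nsmul_eq_mul]
      linear_combination ((s + 1 : ℕ) : R⟦X⟧) * r ^ (s + 1) * hqr +
        ((s + 1 : ℕ) : R⟦X⟧) * X * r ^ s * sq_mul_derivative_eq_neg_derivative_of_mul_eq_one hqr
    have hcoeff := congrArg (coeff (s + 1)) hscaled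
    rw [map_nsmul, map_sub, map_nsmul, coeff_X_mul_derivative, sub_self] at hcoeff
    simpa using (smul_eq_zero.mp hcoeff).resolve_left s.succ_ne_zero

theorem coeff_subst_X_mul_mul_pow_mul_derivative [IsAddTorsionFree R] {q r : R⟦X⟧}
    (hqr : q * r = 1) (P : R⟦X⟧) (m : ℕ) :
    coeff m (P.subst (X * q) * r ^ (m + 1) * d⁄dX R (X * q)) = coeff m P := by
  have hs : HasSubst (X * q) := HasSubst.of_constantCoeff_zero' (by simp)
  have hmonomial : ∀ j ≤ m,
      coeff m ((X * q) ^ j * r ^ (m + 1) * d⁄dX R (X * q)) = if j = m then 1 else 0 := by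
    intro j hj
    obtain ⟨t, rfl⟩ := Nat.exists_eq_add_of_le hj
    have hcancel : (X * q) ^ j * r ^ (j + t + 1) = X ^ j * r ^ (t + 1) := by
      calc (X * q) ^ j * r ^ (j + t + 1) = X ^ j * (q * r) ^ j * r ^ (t + 1) := by ring
        _ = X ^ j * r ^ (t + 1) := by rw [hqr, one_pow, mul_one]
    rw [hcancel, mul_assoc, add_comm j t, coeff_X_pow_mul,
      coeff_pow_succ_mul_derivative_X_mul hqr]
    simp
  have htail : coeff m ((X * q) ^ (m + 1) * (mk fun i ↦ coeff (i + (m + 1)) P).subst (X * q) *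
      r ^ (m + 1) * d⁄dX R (X * q)) = 0 := by
    rw [mul_pow, mul_assoc, mul_assoc, mul_assoc, coeff_X_pow_mul', if_neg (by omega)]
  conv_lhs => rw [eq_X_pow_mul_shift_add_trunc (m + 1) P]
  rw [subst_add hs, subst_mul hs, subst_pow hs, subst_X hs, subst_coe hs,
    Polynomial.aeval_eq_sum_range' (natDegree_trunc_lt P m), add_mul, add_mul, map_add, htail,
    zero_add, Finset.sum_mul, Finset.sum_mul, map_sum]
  simp_rw [smul_mul_assoc, map_smul]
  rw [Finset.sum_congr rfl fun j hj ↦ by rw [hmonomial j (Finset.mem_range_succ_iff.mp hj)]]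
  simp [coeff_trunc]

theorem map_derivative {S : Type*} [CommRing S] (f : R →+* S) (g : R⟦X⟧) :
    map f (d⁄dX R g) = d⁄dX S (map f g) := by
  ext n
  simp [coeff_derivative]

theorem lagrange_inversion [IsAddTorsionFree R] {φ w : R⟦X⟧}
    (hφ : IsUnit (constantCoeff φ)) (hw : w = X * φ.subst w) (g : R⟦X⟧) (m : ℕ) :
    (m + 1 : R) * coeff (m + 1) (g.subst w) = coeff m (d⁄dX R g * φ ^ (m + 1)) := by
  have hw0 : constantCoeff w = 0 := by rw [hw]; simp
  have hs : HasSubst w := HasSubst.of_constantCoeff_zero' hw0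
  set q := φ.subst w with hq
  have hq0 : constantCoeff q = constantCoeff φ := by
    have h := constantCoeff_subst_eq_zero hw0 (φ - C (constantCoeff φ)) (by simp)
    rw [subst_sub hs, subst_C] at h
    exact sub_eq_zero.mp h
  obtain ⟨r, hqr⟩ := (isUnit_iff_constantCoeff.mpr (hq0 ▸ hφ)).exists_right_inv
  have hpow : q ^ (m + 1) * r ^ (m + 1) = 1 := by rw [← mul_pow, hqr, one_pow]
  have hres := coeff_subst_X_mul_mul_pow_mul_derivative hqr (d⁄dX R g * φ ^ (m + 1)) m
  rw [← hw] at hres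
  calc (m + 1 : R) * coeff (m + 1) (g.subst w) = coeff m (d⁄dX R (g.subst w)) := by
        rw [coeff_derivative, mul_comm]
    _ = coeff m ((d⁄dX R g).subst w * d⁄dX R w) := by rw [derivative_subst hs]
    _ = coeff m ((d⁄dX R g * φ ^ (m + 1)).subst w * r ^ (m + 1) * d⁄dX R w) := by
        rw [subst_mul hs, subst_pow hs, ← hq]
        congr 1
        linear_combination -(d⁄dX R g).subst w * d⁄dX R w * hpow
    _ = coeff m (d⁄dX R g * φ ^ (m + 1)) := hres

end PowerSeries

open PowerSeries

theorem psComp_eq_subst {R : Type*} [CommRing R] {h : R⟦X⟧} (hh : constantCoeff h = 0)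
    (g : R⟦X⟧) : psComp g h = g.subst h := by
  ext n
  rw [psComp, coeff_mk, coeff_subst' (HasSubst.of_constantCoeff_zero' hh),
    finsum_eq_sum_of_support_subset _ (s := Finset.range (n + 1))]
  · simp
  · refine Function.support_subset_iff'.mpr fun d hdn ↦ ?_
    obtain ⟨h', rfl⟩ := X_dvd_iff.mpr hh
    rw [mul_pow, coeff_X_pow_mul', if_neg (by simpa using hdn), smul_zero]

theorem lif_functional_phi_general {K : Type*} [CommRing K] [IsDomain K] [CharZero K]
    (φ fbar : PowerSeries K)
    (hφ0 : PowerSeries.constantCoeff φ ≠ 0)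
    (hfbar0 : PowerSeries.constantCoeff fbar = 0)
    (hfe : fbar = PowerSeries.X * psComp φ fbar)
    (g : PowerSeries K) (n : ℕ) (hn : 0 < n) :
    (n : K) * PowerSeries.coeff n (psComp g fbar) =
      PowerSeries.coeff (n - 1) ((PowerSeries.derivative K g) * φ ^ n) := by
  obtain ⟨m, rfl⟩ := Nat.exists_eq_add_one_of_ne_zero hn.ne'
  let ι := algebraMap K (FractionRing K)
  have hι : Function.Injective ι := IsFractionRing.injective K (FractionRing K)
  have : CharZero (FractionRing K) := charZero_of_injective_algebraMap hι
  have hs : HasSubst fbar := HasSubst.of_constantCoeff_zero' hfbar0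
  rw [psComp_eq_subst hfbar0] at hfe ⊢
  have hmap (f : K⟦X⟧) : map ι (f.subst fbar) = (map ι f).subst (map ι fbar) := map_subst hs f
  have hunit : IsUnit (constantCoeff (map ι φ)) := by
    rw [← coeff_zero_eq_constantCoeff_apply, coeff_map, coeff_zero_eq_constantCoeff_apply]
    exact isUnit_iff_ne_zero.mpr ((map_ne_zero_iff ι hι).mpr hφ0)
  have hw : map ι fbar = X * (map ι φ).subst (map ι fbar) := by
    rw [← hmap, ← map_X ι, ← map_mul, ← hfe]
  have hfrac := lagrange_inversion hunit hw (map ι g) m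
  rw [← hmap, ← map_derivative, ← map_pow, ← map_mul, coeff_map, coeff_map] at hfrac
  apply hι
  simpa using hfrac

/-- Functional form of the Lagrange Inversion Formula (second equality):
`n·[x^n] g(f̄(x)) = [x^{n-1}] (g'(x)·φ(x)^n)`. -/
theorem lif_functional_phi {K : Type*} [CommRing K] [IsDomain K] [CharZero K]
    (φ f fbar : PowerSeries K)
    (hφ0 : PowerSeries.constantCoeff φ ≠ 0)
    (hf0 : PowerSeries.constantCoeff f = 0)
    (hf1 : PowerSeries.coeff 1 f ≠ 0)
    (hfbar0 : PowerSeries.constantCoeff fbar = 0)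
    (hcomp1 : psComp f fbar = PowerSeries.X)
    (hcomp2 : psComp fbar f = PowerSeries.X)
    (hfe : fbar = PowerSeries.X * psComp φ fbar)
    (g : PowerSeries K) (n : ℕ) (hn : 0 < n) :
    (n : K) * PowerSeries.coeff n (psComp g fbar) =
      PowerSeries.coeff (n - 1) ((PowerSeries.derivative K g) * φ ^ n) :=
  lif_functional_phi_general φ fbar hφ0 hfbar0 hfe g n hn
end

section
/- Let K be an integral domain of characteristic zero, and let g and h be formal power series over K with g(x)·h(x) = 1 (so h is the multiplicative inverse g^{-1} of g). Then for all natural numbers j and s, [x^s]( x^j·g(x)^j·h(x)^s + x^{j+1}·g(x)^j·h(x)^{s+1}·g'(x) ) equals 1 if j = s and equals 0 otherwise. (In the notation of the paper, [x^s]( x^j·g^{j-s}(x) + x^{j+1}·g^{j-1-s}(x)·g'(x) ) = δ_{j,s}, where negative powers of g are interpreted via its multiplicative inverse h.) -/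
/-!
Write `a` and `b` for the two summands and `d` for `d/dX`. Since `d h = -h² d g`, the Leibniz
rule gives `d (X^{j+1} g^j h^s) = (j+1) a + (j-s) b`. Comparing the coefficients of `X^s`, where
the left side contributes `(s+1) [X^s] a`, yields `(j-s) [X^s] (a+b) = 0`. For `j ≠ s` this
forces the coefficient to vanish since `K` is a domain of characteristic zero; for `j = s` we
have `a = X^s` and `b ∈ X^{s+1} K⟦X⟧`.
-/

namespace Derivation

variable {R A : Type*} [CommRing R] [CommRing A] [Algebra R A] (D : Derivation R A A)
  {g h : A}

theorem leibniz_pow_of_mul_eq_one (hgh : g * h = 1) (n : ℕ) :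
    D (g ^ n) = n * g ^ n * h * D g := by
  induction n with
  | zero => simp
  | succ n ih =>
    rw [pow_succ, leibniz, ih, smul_eq_mul, smul_eq_mul, Nat.cast_succ]
    linear_combination (-g ^ n * D g) * hgh

theorem leibniz_pow_right_of_mul_eq_one (hgh : g * h = 1) (n : ℕ) :
    D (h ^ n) = -(n * h ^ (n + 1) * D g) := by
  have hhg : h * g = 1 := mul_comm g h ▸ hgh
  rw [D.leibniz_pow_of_mul_eq_one hhg, D.leibniz_of_mul_eq_one hhg, smul_eq_mul]
  linear_combination (-(n : A) * h ^ (n + 1) * D g) * hgh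

/-- For `D x = 1`, i.e. `D = d/dx`, and `h = g⁻¹`, this is
`(x^{j+1} g^{j-s})' = (j+1) x^j g^{j-s} + (j-s) x^{j+1} g^{j-s-1} g'`. -/
theorem leibniz_pow_succ_mul_pow_mul_pow {x : A} (hx : D x = 1) (hgh : g * h = 1) (j s : ℕ) :
    D (x * (x ^ j * g ^ j * h ^ s)) =
      (j + 1) * (x ^ j * g ^ j * h ^ s) +
        ((j : A) - s) * (x ^ (j + 1) * g ^ j * h ^ (s + 1) * D g) := by
  rw [← mul_assoc, ← mul_assoc, ← pow_succ', leibniz, leibniz, D.leibniz_pow_of_mul_eq_one hgh,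
    D.leibniz_pow_right_of_mul_eq_one hgh, leibniz_pow, hx]
  simp only [smul_eq_mul, nsmul_eq_mul, Nat.add_sub_cancel, Nat.cast_succ]
  ring

end Derivation

namespace PowerSeries

variable {R : Type*} [CommRing R] {g h : R⟦X⟧}

theorem coeff_derivative_X_mul (f : R⟦X⟧) (n : ℕ) :
    coeff n (d⁄dX R (X * f)) = (n + 1) * coeff n f := by
  rw [coeff_derivative, coeff_succ_X_mul, mul_comm]

theorem natCast_sub_mul_coeff_X_pow_mul_pow_mul_pow_add_eq_zero (hgh : g * h = 1) (j s : ℕ) :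
    ((j : R) - s) * coeff s (X ^ j * g ^ j * h ^ s + X ^ (j + 1) * g ^ j * h ^ (s + 1) * d⁄dX R g) =
      0 := by
  have hcoeff := congrArg (coeff s)
    ((d⁄dX R).leibniz_pow_succ_mul_pow_mul_pow derivative_X hgh j s)
  rw [coeff_derivative_X_mul, ← map_natCast C j, ← map_natCast C s, ← map_one C, ← map_add C,
    ← map_sub C, map_add, coeff_C_mul, coeff_C_mul] at hcoeff
  rw [map_add]
  linear_combination -hcoeff

theorem coeff_X_pow_mul_pow_mul_pow_add_self (hgh : g * h = 1) (s : ℕ) :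
    coeff s (X ^ s * g ^ s * h ^ s + X ^ (s + 1) * g ^ s * h ^ (s + 1) * d⁄dX R g) = 1 := by
  rw [mul_assoc, ← mul_pow, hgh, one_pow, mul_one, mul_assoc, mul_assoc, map_add,
    coeff_X_pow_mul', if_neg (by omega), coeff_X_pow_self, add_zero]

end PowerSeries

open PowerSeries in
/-- Lemma 1 of the paper:
`[x^s]( x^j·g^{j-s}(x) + x^{j+1}·g^{j-1-s}(x)·g'(x) ) = δ_{j,s}`,
where negative powers of `g` are interpreted via its multiplicative inverse `h`. -/
theorem lemma1_kronecker {K : Type*} [CommRing K] [IsDomain K] [CharZero K]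
    (g h : PowerSeries K) (hgh : g * h = 1) (j s : ℕ) :
    PowerSeries.coeff s
        (PowerSeries.X ^ j * g ^ j * h ^ s +
          PowerSeries.X ^ (j + 1) * g ^ j * h ^ (s + 1) * (PowerSeries.derivative K g)) =
      if j = s then 1 else 0 := by
  split_ifs with hjs
  · subst hjs
    exact coeff_X_pow_mul_pow_mul_pow_add_self hgh j
  · have hjs' : (j : K) - s ≠ 0 := sub_ne_zero.mpr (Nat.cast_injective.ne hjs)
    exact (mul_eq_zero.mp
      (natCast_sub_mul_coeff_X_pow_mul_pow_mul_pow_add_eq_zero hgh j s)).resolve_left hjs'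
end

section
/- Let K be an integral domain of characteristic zero, and let g and h be formal power series over K with g(x)·h(x) = 1 (so h is the multiplicative inverse g^{-1} of g). Then for all natural numbers j and s with j < s, [x^{s-j}]( g(x)^j·h(x)^s ) + [x^{s-j-1}]( g(x)^j·h(x)^{s+1}·g'(x) ) = 0. (In the notation of the paper: [x^{s-j}] g^{j-s}(x) + [x^{s-j-1}]( g^{j-s-1}(x)·g'(x) ) = 0, where negative powers of g are interpreted via its multiplicative inverse h.) -/
/-!
Differentiating `g ^ j * h ^ s` with `h' = -h ^ 2 g'` gives
`(g ^ j * h ^ s)' = (j - s) g ^ j h ^ (s + 1) g'`. Comparing the coefficients of `x ^ (s - j - 1)`,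
the left-hand side contributes `(s - j) [x ^ (s - j)] (g ^ j h ^ s)`, and dividing by `s - j ≠ 0`
gives the identity.
-/

theorem natCast_mul_pow_pred_of_mul_eq_one {A : Type*} [CommRing A] {a b : A} (h : a * b = 1)
    (n : ℕ) : (n : A) * a ^ (n - 1) = n * (a ^ n * b) := by
  rcases n with _ | n
  · simp
  · rw [Nat.add_sub_cancel, pow_succ, mul_assoc _ a b, h, mul_one]

namespace Derivation

variable {R A M : Type*} [CommRing R] [CommRing A] [Algebra R A] [AddCommGroup M] [Module A M]
  [Module R M] (D : Derivation R A M)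

theorem leibniz_pow_mul_pow_of_mul_eq_one {a b : A} (h : a * b = 1) (j s : ℕ) :
    D (a ^ j * b ^ s) = ((j : ℤ) - s) • (a ^ j * b ^ (s + 1)) • D a := by
  have hb : D b = -b ^ 2 • D a := D.leibniz_of_mul_eq_one (by rw [mul_comm, h])
  have ha : (j : A) * a ^ (j - 1) = j * (a ^ j * b) := natCast_mul_pow_pred_of_mul_eq_one h j
  have hb' : (s : A) * b ^ (s - 1) = s * (b ^ s * a) :=
    natCast_mul_pow_pred_of_mul_eq_one (by rw [mul_comm, h]) s
  rw [leibniz, leibniz_pow, leibniz_pow, hb]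
  simp only [smul_smul, ← Nat.cast_smul_eq_nsmul A, ← Int.cast_smul_eq_zsmul A, ← add_smul]
  push_cast
  congr 1
  linear_combination b ^ s * ha - a ^ j * b ^ 2 * hb' - a ^ j * s * b ^ (s + 1) * h

end Derivation

open PowerSeries in
/-- The nontrivial case `j < s` in the proof of Lemma 1 of the paper:
`[x^{s-j}] g^{j-s}(x) + [x^{s-j-1}]( g^{j-s-1}(x)·g'(x) ) = 0`,
where negative powers of `g` are interpreted via its multiplicative inverse `h`. -/
theorem lemma1_nontrivial_case {K : Type*} [CommRing K] [IsDomain K] [CharZero K]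
    (g h : PowerSeries K) (hgh : g * h = 1) (j s : ℕ) (hjs : j < s) :
    PowerSeries.coeff (s - j) (g ^ j * h ^ s) +
      PowerSeries.coeff (s - j - 1) (g ^ j * h ^ (s + 1) * (PowerSeries.derivative K g)) = 0 := by
  obtain ⟨n, rfl⟩ := Nat.exists_eq_add_of_lt hjs
  have hderiv := congrArg (coeff n)
    ((derivative K).leibniz_pow_mul_pow_of_mul_eq_one hgh j (j + n + 1))
  rw [coeff_derivative, map_zsmul, smul_eq_mul, zsmul_eq_mul] at hderiv
  push_cast at hderiv
  rw [show j + n + 1 - j = n + 1 by omega, Nat.add_sub_cancel]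
  have hscaled : (coeff (n + 1) (g ^ j * h ^ (j + n + 1)) +
      coeff n (g ^ j * h ^ (j + n + 1 + 1) * derivative K g)) * (n + 1) = 0 := by
    linear_combination hderiv
  exact (mul_eq_zero.mp hscaled).resolve_right (Nat.cast_add_one_ne_zero n)
end

section
/- Let R be a commutative ring and let φ be a formal power series over R. Then for all integers n ≥ 1 and l ≥ 0, (n+1)·[x^{n-1}]( (x^l·φ(x))'·φ(x)^n ) = n·(l+1)·[x^{n-l}] φ(x)^{n+1}, where [x^{n-l}] is interpreted as 0 when l > n. -/
/-!
The Leibniz rule gives `(n+1) φⁿ (Xˡφ)' = (Xˡφⁿ⁺¹)' + n φⁿ⁺¹ (Xˡ)'`. Taking `[x^{n-1}]`, the first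
term contributes `n [xⁿ](Xˡφⁿ⁺¹)`, and since `X (Xˡ)' = l Xˡ` the second contributes
`n l [xⁿ](Xˡφⁿ⁺¹)`; finally `[xⁿ](Xˡφⁿ⁺¹) = [x^{n-l}] φⁿ⁺¹`.
-/

open PowerSeries

theorem Derivation.succ_nsmul_pow_smul_map_mul {R A M : Type*} [CommSemiring R] [CommSemiring A]
    [Algebra R A] [AddCommMonoid M] [Module A M] [Module R M] (D : Derivation R A M)
    (a b : A) (n : ℕ) :
    (n + 1) • b ^ n • D (a * b) = D (a * b ^ (n + 1)) + n • b ^ (n + 1) • D a := by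
  rw [D.leibniz, D.leibniz, D.leibniz_pow, Nat.add_sub_cancel]
  module

namespace PowerSeries

variable {R : Type*} [CommSemiring R]

theorem X_mul_derivative_X_pow (l : ℕ) : X * d⁄dX R (X ^ l) = (l : R⟦X⟧) * X ^ l := by
  rw [derivative_pow, derivative_X]
  rcases l with _ | l
  · simp
  · rw [Nat.add_sub_cancel, pow_succ]
    ring

theorem coeff_derivative_X_pow_mul (f : R⟦X⟧) (l m : ℕ) :
    coeff m (d⁄dX R (X ^ l) * f) = l * coeff (m + 1) (X ^ l * f) := by
  rw [← coeff_succ_X_mul, ← mul_assoc, X_mul_derivative_X_pow, mul_assoc, ← map_natCast C,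
    coeff_C_mul]

end PowerSeries

/-- Computational core of the inductive step of the first proof of LIF:
`(n+1)·[x^{n-1}]( (x^l·φ(x))'·φ(x)^n ) = n·(l+1)·[x^{n-l}] φ(x)^{n+1}`,
where `[x^{n-l}]` is interpreted as `0` when `l > n`. -/
theorem inductive_step_core {R : Type*} [CommRing R]
    (φ : PowerSeries R) (n l : ℕ) (hn : 1 ≤ n) :
    ((n : R) + 1) * PowerSeries.coeff (R := R) (n - 1)
        ((PowerSeries.derivative R (PowerSeries.X ^ l * φ)) * φ ^ n) =
      (n : R) * ((l : R) + 1) *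
        (if l ≤ n then PowerSeries.coeff (R := R) (n - l) (φ ^ (n + 1)) else 0) := by
  obtain ⟨m, rfl⟩ := Nat.exists_eq_add_of_le' hn
  have key := congrArg (coeff m) ((d⁄dX R).succ_nsmul_pow_smul_map_mul (X ^ l) φ (m + 1))
  rw [map_nsmul, map_add, map_nsmul, coeff_derivative, smul_eq_mul, smul_eq_mul, mul_comm (φ ^ _),
    mul_comm (φ ^ _), coeff_derivative_X_pow_mul, nsmul_eq_mul, nsmul_eq_mul] at key
  rw [Nat.add_sub_cancel, ← coeff_X_pow_mul']
  push_cast at key ⊢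
  linear_combination key
end
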